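/- Let ν be a natural number and w a complex number. With Γ_ν(s) = π^{ν(ν−1)/4} · ∏_{i=0}^{ν−1} Γ(s − i/2), the identity Γ_ν(w − (ν+1)/2) · ∏_{i=1}^{⌊ν/2⌋} Γ(w − i) = π^{ν(ν−1)/4} · ( ∏_{i=1}^{ν} Γ(w − i) ) · ∏_{i=1}^{⌊ν/2⌋} Γ(w + i − (2ν+1)/2) holds for every w ∈ ℂ. (Cross-multiplied form of Γ_ν(w − (ν+1)/2) · ∏_{i=1}^{⌊ν/2⌋} Γ(w−i)/Γ(w + i − (2ν+1)/2) = π^{ν(ν−1)/4} ∏_{i=1}^{ν} Γ(w−i).) -/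

import Mathlib

/-!
The factors of `Γ_ν(w - (ν+1)/2)` are `Γ(w - k/2)` for `ν < k ≤ 2ν`. The even `k = 2j` give
`Γ(w - j)` for `ν/2 < j ≤ ν`, which together with the factors `Γ(w - j)`, `1 ≤ j ≤ ν/2`, on the
left make up `∏_{j=1}^{ν} Γ(w - j)`; the odd `k = 2ν + 1 - 2i` give `Γ(w + i - (2ν+1)/2)` for
`1 ≤ i ≤ ν/2`. No property of `Γ` enters, so the identity holds for any function.
-/

open Complex

/-- The Siegel Gamma factor `Γ_ν(s) = π^{ν(ν-1)/4} · ∏_{i=0}^{ν-1} Γ(s - i/2)`. -/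
noncomputable def GammaSiegel (ν : ℕ) (s : ℂ) : ℂ :=
  (Real.pi : ℂ) ^ (((ν * (ν - 1) : ℕ) : ℂ) / 4) *
    ∏ i ∈ Finset.range ν, Complex.Gamma (s - (i : ℂ) / 2)

open Finset

section
variable {M : Type*} [CommMonoid M]

theorem prod_Ico_succ_two_mul_succ_eq_prod_even_mul_prod_odd (g : ℕ → M) (ν : ℕ) :
    ∏ k ∈ Ico (ν + 1) (2 * ν + 1), g k =
      (∏ j ∈ Ioc (ν / 2) ν, g (2 * j)) * ∏ i ∈ Icc 1 (ν / 2), g (2 * ν + 1 - 2 * i) := by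
  rw [← prod_filter_mul_prod_filter_not _ (fun k => Even k)]
  congr 1
  · refine (prod_nbij' (fun j => 2 * j) (fun k => k / 2) ?_ ?_ ?_ ?_ ?_).symm <;>
      intro a ha <;> simp only [mem_filter, mem_Ico, mem_Ioc, Nat.even_iff] at * <;> omega
  · refine (prod_nbij' (fun i => 2 * ν + 1 - 2 * i) (fun k => ν - k / 2) ?_ ?_ ?_ ?_ ?_).symm <;>
      intro a ha <;> simp only [mem_filter, mem_Ico, mem_Icc, Nat.even_iff] at * <;> omega

theorem prod_range_sub_half_mul_prod_Icc_sub (f : ℂ → M) (ν : ℕ) (w : ℂ) :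
    (∏ i ∈ range ν, f (w - ((ν : ℂ) + 1) / 2 - (i : ℂ) / 2)) * ∏ i ∈ Icc 1 (ν / 2), f (w - i) =
      (∏ i ∈ Icc 1 ν, f (w - i)) * ∏ i ∈ Icc 1 (ν / 2), f (w + i - (2 * (ν : ℂ) + 1) / 2) := by
  have h_reindex : ∏ i ∈ range ν, f (w - ((ν : ℂ) + 1) / 2 - (i : ℂ) / 2) =
      ∏ k ∈ Ico (ν + 1) (2 * ν + 1), f (w - (k : ℂ) / 2) := by
    rw [prod_Ico_eq_prod_range, show 2 * ν + 1 - (ν + 1) = ν by omega]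
    refine prod_congr rfl fun i _ => ?_
    push_cast
    ring_nf
  have h_even (j : ℕ) : f (w - ((2 * j : ℕ) : ℂ) / 2) = f (w - j) := by
    push_cast
    ring_nf
  have h_odd : ∀ i ∈ Icc 1 (ν / 2),
      f (w - ((2 * ν + 1 - 2 * i : ℕ) : ℂ) / 2) = f (w + i - (2 * (ν : ℂ) + 1) / 2) := by
    intro i hi
    rw [mem_Icc] at hi
    rw [Nat.cast_sub (by omega)]
    push_cast
    ring_nf
  have h_split : ∏ i ∈ Icc 1 ν, f (w - i) =
      (∏ i ∈ Icc 1 (ν / 2), f (w - i)) * ∏ j ∈ Ioc (ν / 2) ν, f (w - j) := by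
    have h_Icc_one (n : ℕ) : Icc 1 n = Ioc 0 n := Icc_add_one_left_eq_Ioc 0 n
    rw [h_Icc_one, h_Icc_one, prod_Ioc_consecutive _ (Nat.zero_le _) (Nat.div_le_self ν 2)]
  rw [h_reindex, prod_Ico_succ_two_mul_succ_eq_prod_even_mul_prod_odd, h_split,
    prod_congr rfl h_odd]
  simp only [h_even]
  ac_rfl
end

theorem stmt_12 (ν : ℕ) (w : ℂ) :
    GammaSiegel ν (w - ((ν : ℂ) + 1) / 2) *
        ∏ i ∈ Finset.Icc 1 (ν / 2), Complex.Gamma (w - (i : ℂ)) =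
      (Real.pi : ℂ) ^ (((ν * (ν - 1) : ℕ) : ℂ) / 4) *
        (∏ i ∈ Finset.Icc 1 ν, Complex.Gamma (w - (i : ℂ))) *
        ∏ i ∈ Finset.Icc 1 (ν / 2),
          Complex.Gamma (w + (i : ℂ) - (2 * (ν : ℂ) + 1) / 2) := by
  rw [GammaSiegel, mul_assoc, prod_range_sub_half_mul_prod_Icc_sub, mul_assoc]
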